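/- arXiv:1210.4180 — 5 statements merged into one kernel-verified Lean document; each statement's English description precedes it below -/
import Mathlib

section
/- Suppose real numbers ν₀, ν₁, ν₂, ν₂ᶜ, ν₃, ε₀, ε₁, ε₂, ε₂ᶜ, ε₃ satisfy: ε₀ = (3/2)ν₀, ε₁ ≤ (3/2)ν₁, ε₂ - ε₂ᶜ = 2(ν₂ - ν₂ᶜ), ε₂ᶜ = (5/2)ν₂ᶜ, ε₃ ≤ 2ν₃, all νᵢ are nonnegative, 0 ≤ ν₂ᶜ ≤ ν₂, and furthermore n = ν₀ + ν₁ + ν₂ + ν₃ > 0 and m = ε₀ + ε₁ + ε₂ + ε₃. If m/n ≥ (4 + δ)/2 for some δ > 0, then ν₂ᶜ ≥ δ·n. -/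
/-- Only the conservative-quadratic extensions add more than two edges per vertex (namely 5/2). -/
lemma two_mul_edge_sum_le (ν₀ ν₁ ν₂ ν₂c ν₃ ε₀ ε₁ ε₂ ε₂c ε₃ : ℝ)
    (h0 : ε₀ = (3/2) * ν₀) (h1 : ε₁ ≤ (3/2) * ν₁)
    (h2 : ε₂ - ε₂c = 2 * (ν₂ - ν₂c)) (h2c : ε₂c = (5/2) * ν₂c)
    (h3 : ε₃ ≤ 2 * ν₃) (hν₀ : 0 ≤ ν₀) (hν₁ : 0 ≤ ν₁) :
    2 * (ε₀ + ε₁ + ε₂ + ε₃) ≤ 4 * (ν₀ + ν₁ + ν₂ + ν₃) + ν₂c := by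
  linarith

theorem stmt_2_general (ν₀ ν₁ ν₂ ν₂c ν₃ ε₀ ε₁ ε₂ ε₂c ε₃ n m δ : ℝ)
    (h0 : ε₀ = (3/2) * ν₀) (h1 : ε₁ ≤ (3/2) * ν₁)
    (h2 : ε₂ - ε₂c = 2 * (ν₂ - ν₂c)) (h2c : ε₂c = (5/2) * ν₂c)
    (h3 : ε₃ ≤ 2 * ν₃)
    (hν₀ : 0 ≤ ν₀) (hν₁ : 0 ≤ ν₁)
    (hn : n = ν₀ + ν₁ + ν₂ + ν₃) (hnpos : 0 < n)
    (hm : m = ε₀ + ε₁ + ε₂ + ε₃)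
    (hdens : (4 + δ) / 2 ≤ m / n) :
    δ * n ≤ ν₂c := by
  have hdens' : (4 + δ) * n ≤ 2 * m := by
    rwa [div_le_div_iff₀ two_pos hnpos, mul_comm m] at hdens
  have hedges := two_mul_edge_sum_le ν₀ ν₁ ν₂ ν₂c ν₃ ε₀ ε₁ ε₂ ε₂c ε₃ h0 h1 h2 h2c h3 hν₀ hν₁
  rw [← hn, ← hm] at hedges
  linarith

theorem stmt_2 (ν₀ ν₁ ν₂ ν₂c ν₃ ε₀ ε₁ ε₂ ε₂c ε₃ n m δ : ℝ)
    (h0 : ε₀ = (3/2) * ν₀) (h1 : ε₁ ≤ (3/2) * ν₁)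
    (h2 : ε₂ - ε₂c = 2 * (ν₂ - ν₂c)) (h2c : ε₂c = (5/2) * ν₂c)
    (h3 : ε₃ ≤ 2 * ν₃)
    (hν₀ : 0 ≤ ν₀) (hν₁ : 0 ≤ ν₁) (hν₂ : 0 ≤ ν₂) (hν₃ : 0 ≤ ν₃)
    (hν₂c : 0 ≤ ν₂c) (hν₂c' : ν₂c ≤ ν₂)
    (hn : n = ν₀ + ν₁ + ν₂ + ν₃) (hnpos : 0 < n)
    (hm : m = ε₀ + ε₁ + ε₂ + ε₃)
    (hδ : 0 < δ) (hdens : (4 + δ) / 2 ≤ m / n) :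
    δ * n ≤ ν₂c :=
  stmt_2_general ν₀ ν₁ ν₂ ν₂c ν₃ ε₀ ε₁ ε₂ ε₂c ε₃ n m δ h0 h1 h2 h2c h3 hν₀ hν₁ hn hnpos hm hdens
end

section
/- Let G be a 3-connected graph and let G' be obtained from G by a conservative-quadratic extension: choose distinct vertices u, v of G with u and v non-adjacent, and vertices x ≠ u, y ≠ v with {u,v} ≠ {x,y}; add two new adjacent vertices u', v' where u' is adjacent to u and x, and v' is adjacent to v and y. Then G' is 3-connected. -/
open SimpleGraph Sum

def ThreeConnected {V : Type*} [Fintype V] (G : SimpleGraph V) : Prop :=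
  4 ≤ Fintype.card V ∧ ∀ S : Set V, S.ncard ≤ 2 → (G.induce Sᶜ).Connected

def Bicritical {V : Type*} (G : SimpleGraph V) : Prop :=
  ∀ a b : V, a ≠ b →
    ∃ M : (G.induce ({a, b}ᶜ : Set V)).Subgraph, M.IsPerfectMatching

def consQuadExt {V : Type*} (G : SimpleGraph V) (u v x y : V) :
    SimpleGraph (V ⊕ Bool) :=
  SimpleGraph.fromEdgeSet
    ((Sym2.map inl '' G.edgeSet) ∪
      {s(inr false, inr true), s(inr false, inl u), s(inr false, inl x),
       s(inr true, inl v), s(inr true, inl y)})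

/-!
Deleting a set `S` of at most two vertices from `G'` deletes a set `T` of at most two old
vertices, so the surviving old vertices span a connected copy of `G - T`. It remains to join
each surviving new vertex to that copy. The vertex `u'` sees `u` and `x`; if both are deleted,
they exhaust `S`, so `v'` survives and sees `v` and `y`. All four of `u, x, v, y` can be
deleted only if `{u, v} = {x, y}`.
-/

namespace SimpleGraph

variable {V W : Type*}

theorem connected_of_hom_of_forall_reachable {G : SimpleGraph V} {H : SimpleGraph W}
    (f : G →g H) (hG : G.Connected) (h : ∀ w, ∃ v, H.Reachable w (f v)) : H.Connected := by
  have : Nonempty W := ⟨f hG.nonempty.some⟩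
  refine ⟨fun w₁ w₂ => ?_⟩
  obtain ⟨v₁, h₁⟩ := h w₁
  obtain ⟨v₂, h₂⟩ := h w₂
  exact h₁.trans (((hG v₁ v₂).map f).trans h₂.symm)

theorem exists_reachable_induce_compl [Finite W] {H : SimpleGraph W} {S C : Set W}
    (hS : S.ncard ≤ 2) {w w' a b c d : W} (hw : w ∉ S) (hab : a ≠ b) (hw'a : w' ≠ a)
    (hw'b : w' ≠ b) (ha : H.Adj w a) (hb : H.Adj w b) (hww' : H.Adj w w') (hc : H.Adj w' c)
    (hd : H.Adj w' d) (haC : a ∈ C) (hbC : b ∈ C) (hcC : c ∈ C) (hdC : d ∈ C)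
    (hall : ¬ (a ∈ S ∧ b ∈ S ∧ c ∈ S ∧ d ∈ S)) :
    ∃ z ∈ C, ∃ hz : z ∉ S, (H.induce Sᶜ).Reachable ⟨w, hw⟩ ⟨z, hz⟩ := by
  have step {p q : W} (hp : p ∉ S) (hq : q ∉ S) (h : H.Adj p q) :
      (H.induce Sᶜ).Reachable ⟨p, hp⟩ ⟨q, hq⟩ :=
    Adj.reachable (G := H.induce Sᶜ) h
  by_cases haS : a ∈ S
  swap
  · exact ⟨a, haC, haS, step hw haS ha⟩
  by_cases hbS : b ∈ S
  swap
  · exact ⟨b, hbC, hbS, step hw hbS hb⟩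
  have hSab : ({a, b} : Set W) = S :=
    Set.eq_of_subset_of_ncard_le (Set.pair_subset haS hbS) (by rwa [Set.ncard_pair hab])
  have hw' : w' ∉ S := by
    rw [← hSab]
    rintro (h | h) <;> contradiction
  by_cases hcS : c ∈ S
  · have hdS : d ∉ S := fun hdS => hall ⟨haS, hbS, hcS, hdS⟩
    exact ⟨d, hdC, hdS, (step hw hw' hww').trans (step hw' hdS hd)⟩
  · exact ⟨c, hcC, hcS, (step hw hw' hww').trans (step hw' hcS hc)⟩

end SimpleGraph

theorem Set.pair_eq_pair_of_ncard_le_two {α : Type*} [Finite α] {T : Set α} (hT : T.ncard ≤ 2)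
    {u v x y : α} (huv : u ≠ v) (hx : x ≠ u) (hy : y ≠ v) (hu : u ∈ T) (hv : v ∈ T)
    (hxT : x ∈ T) (hyT : y ∈ T) : ({u, v} : Set α) = {x, y} := by
  have hT : ({u, v} : Set α) = T :=
    Set.eq_of_subset_of_ncard_le (Set.pair_subset hu hv) (by rwa [Set.ncard_pair huv])
  rw [← hT] at hxT hyT
  have hxv : x = v := hxT.resolve_left hx
  have hyu : y = u := hyT.resolve_right hy
  rw [hxv, hyu, Set.pair_comm]

section consQuadExt

variable {V : Type*} {G : SimpleGraph V} {u v x y : V}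

theorem consQuadExt_adj_inl {a b : V} (h : G.Adj a b) :
    (consQuadExt G u v x y).Adj (inl a) (inl b) := by
  rw [consQuadExt, fromEdgeSet_adj]
  exact ⟨Or.inl ⟨s(a, b), h, rfl⟩, by simp [h.ne]⟩

theorem consQuadExt_adj_inr_false_inr_true :
    (consQuadExt G u v x y).Adj (inr false) (inr true) := by
  simp [consQuadExt]

theorem consQuadExt_adj_inr_false_inl_u :
    (consQuadExt G u v x y).Adj (inr false) (inl u) := by
  simp [consQuadExt]

theorem consQuadExt_adj_inr_false_inl_x :
    (consQuadExt G u v x y).Adj (inr false) (inl x) := by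
  simp [consQuadExt]

theorem consQuadExt_adj_inr_true_inl_v :
    (consQuadExt G u v x y).Adj (inr true) (inl v) := by
  simp [consQuadExt]

theorem consQuadExt_adj_inr_true_inl_y :
    (consQuadExt G u v x y).Adj (inr true) (inl y) := by
  simp [consQuadExt]

end consQuadExt

theorem stmt_4_general {V : Type*} [Fintype V] (G : SimpleGraph V) (u v x y : V)
    (h3 : ThreeConnected G) (huv : u ≠ v)
    (hx : x ≠ u) (hy : y ≠ v) (hne : ({u, v} : Set V) ≠ {x, y}) :
    ThreeConnected (consQuadExt G u v x y) := by
  refine ⟨h3.1.trans (Fintype.card_le_of_injective inl inl_injective), fun S hS => ?_⟩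
  set T : Set V := inl ⁻¹' S
  have hT : T.ncard ≤ 2 :=
    (Set.ncard_le_ncard_of_injOn inl (fun _ h => h) inl_injective.injOn).trans hS
  have hall : ¬ (u ∈ T ∧ x ∈ T ∧ v ∈ T ∧ y ∈ T) := fun ⟨hu, hxT, hv, hyT⟩ =>
    hne (Set.pair_eq_pair_of_ncard_le_two hT huv hx hy hu hv hxT hyT)
  let ι : G →g consQuadExt G u v x y := ⟨inl, consQuadExt_adj_inl⟩
  refine connected_of_hom_of_forall_reachable (induceHom ι fun _ h => h) (h3.2 T hT) ?_
  rintro ⟨a | b, hw⟩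
  · exact ⟨⟨a, hw⟩, .rfl⟩
  obtain ⟨_, ⟨t, rfl⟩, ht, h⟩ : ∃ z ∈ Set.range inl, ∃ hz : z ∉ S,
      ((consQuadExt G u v x y).induce Sᶜ).Reachable ⟨inr b, hw⟩ ⟨z, hz⟩ := by
    cases b
    · exact exists_reachable_induce_compl hS hw (inl_injective.ne hx.symm) inr_ne_inl inr_ne_inl
        consQuadExt_adj_inr_false_inl_u consQuadExt_adj_inr_false_inl_x
        consQuadExt_adj_inr_false_inr_true consQuadExt_adj_inr_true_inl_v
        consQuadExt_adj_inr_true_inl_y ⟨u, rfl⟩ ⟨x, rfl⟩ ⟨v, rfl⟩ ⟨y, rfl⟩ hall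
    · exact exists_reachable_induce_compl hS hw (inl_injective.ne hy.symm) inr_ne_inl inr_ne_inl
        consQuadExt_adj_inr_true_inl_v consQuadExt_adj_inr_true_inl_y
        consQuadExt_adj_inr_false_inr_true.symm consQuadExt_adj_inr_false_inl_u
        consQuadExt_adj_inr_false_inl_x ⟨v, rfl⟩ ⟨y, rfl⟩ ⟨u, rfl⟩ ⟨x, rfl⟩
        fun ⟨hv, hyT, hu, hxT⟩ => hall ⟨hu, hxT, hv, hyT⟩
  exact ⟨⟨t, ht⟩, h⟩

theorem stmt_4 {V : Type*} [Fintype V] (G : SimpleGraph V) (u v x y : V)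
    (h3 : ThreeConnected G) (huv : u ≠ v) (hadj : ¬ G.Adj u v)
    (hx : x ≠ u) (hy : y ≠ v) (hne : ({u, v} : Set V) ≠ {x, y}) :
    ThreeConnected (consQuadExt G u v x y) :=
  stmt_4_general G u v x y h3 huv hx hy hne
end

section
/- Let G be a bicritical graph with at least 4 vertices and let G' be obtained from G by a conservative-quadratic extension with new vertices u', v' (u' adjacent to u, x and to v'; v' adjacent to v, y and to u', where u ≠ x, v ≠ y, u and v non-adjacent in G, {u,v} ≠ {x,y}). Then G' is bicritical. -/
/-!
Perfect matchings of induced subgraphs are handled as involutions pairing each vertex with a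
neighbour; such involutions on disjoint vertex sets glue together, and they transport along graph
embeddings. Write `u' = inr false`, `v' = inr true`. Deleting two old vertices `a, b`, match
`G - {a, b}` and add the edge `u'v'`. Deleting `u'` and `v'`, use a perfect matching of `G`, which
exists once `G` has three vertices: match `p` to `q` inside `G - {a, b}` and add `pq` to a matching
of `G - {p, q}`. Deleting an old vertex `a` and one new vertex, the other new vertex has two
distinct neighbours in `G`, so it can be matched to some `w ≠ a`, and `G - {a, w}` is matched by
bicriticality.
-/

open SimpleGraph Sum

namespace SimpleGraph

variable {W W' : Type*} {G : SimpleGraph W} {G' : SimpleGraph W'} {S T : Set W} {F F' : W → W}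

structure IsMatchingInvOn (G : SimpleGraph W) (S : Set W) (F : W → W) : Prop where
  mapsTo : Set.MapsTo F S S
  leftInvOn : Set.LeftInvOn F F S
  adj : ∀ w ∈ S, G.Adj w (F w)

theorem exists_isPerfectMatching_induce_iff :
    (∃ M : (G.induce S).Subgraph, M.IsPerfectMatching) ↔ ∃ F, G.IsMatchingInvOn S F := by
  classical
  constructor
  · rintro ⟨M, hM⟩
    choose f hf using fun s => (Subgraph.isPerfectMatching_iff |>.mp hM s).exists
    have hff : ∀ s, f (f s) = s := fun s =>
      (Subgraph.isPerfectMatching_iff |>.mp hM (f s)).unique (hf (f s)) (M.adj_symm (hf s))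
    refine ⟨fun w => if h : w ∈ S then f ⟨w, h⟩ else w,
      ⟨fun w hw => ?_, fun w hw => ?_, fun w hw => ?_⟩⟩
    · simp [hw]
    · simp [hw, hff]
    · simpa [hw] using M.adj_sub (hf ⟨w, hw⟩)
  · rintro ⟨F, hF⟩
    let M : (G.induce S).Subgraph :=
      { verts := Set.univ
        Adj := fun r s => s.1 = F r.1
        adj_sub := fun {r s : S} h => by
          change G.Adj r.1 s.1
          rw [h]
          exact hF.adj r.1 r.2
        edge_vert := fun _ => trivial
        symm := ⟨fun (r s : S) (h : s.1 = F r.1) => by rw [h, hF.leftInvOn r.2]⟩ }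
    exact ⟨M, Subgraph.isPerfectMatching_iff.mpr fun r =>
      ⟨⟨F r, hF.mapsTo r.2⟩, rfl, fun s hs => Subtype.ext hs⟩⟩

theorem isMatchingInvOn_pair [DecidableEq W] {p q : W} (h : G.Adj p q) :
    G.IsMatchingInvOn {p, q} (Equiv.swap p q) := by
  refine ⟨?_, ?_, ?_⟩
  · rintro w (rfl | rfl) <;> simp
  · intro w _
    simp
  · rintro w (rfl | rfl)
    · simpa using h
    · simpa using h.symm

theorem IsMatchingInvOn.union [DecidablePred (· ∈ S)] (hS : G.IsMatchingInvOn S F)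
    (hT : G.IsMatchingInvOn T F') (hST : Disjoint S T) :
    G.IsMatchingInvOn (S ∪ T) (S.piecewise F F') := by
  have hT' : ∀ w ∈ T, w ∉ S := fun w hw hwS => Set.disjoint_left.mp hST hwS hw
  refine ⟨?_, ?_, ?_⟩
  · rintro w (hw | hw)
    · simpa [hw] using Or.inl (hS.mapsTo hw)
    · simpa [hT' w hw] using Or.inr (hT.mapsTo hw)
  · rintro w (hw | hw)
    · simp [hw, hS.mapsTo hw, hS.leftInvOn hw]
    · simp [hT' w hw, hT' _ (hT.mapsTo hw), hT.leftInvOn hw]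
  · rintro w (hw | hw)
    · simpa [hw] using hS.adj w hw
    · simpa [hT' w hw] using hT.adj w hw

theorem IsMatchingInvOn.image (f : G ↪g G') (hF : G.IsMatchingInvOn S F) :
    G'.IsMatchingInvOn (f '' S) (Function.extend f (f ∘ F) id) := by
  have hext : ∀ w, Function.extend f (f ∘ F) id (f w) = f (F w) := fun w =>
    f.injective.extend_apply _ _ w
  refine ⟨?_, ?_, ?_⟩
  · rintro _ ⟨w, hw, rfl⟩
    rw [hext]
    exact Set.mem_image_of_mem f (hF.mapsTo hw)
  · rintro _ ⟨w, hw, rfl⟩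
    rw [hext, hext, hF.leftInvOn hw]
  · rintro _ ⟨w, hw, rfl⟩
    rw [hext]
    exact f.map_rel_iff.mpr (hF.adj w hw)

end SimpleGraph

section Bicritical

variable {V : Type*} {G : SimpleGraph V}

theorem bicritical_iff :
    Bicritical G ↔ ∀ a b : V, a ≠ b → ∃ F, G.IsMatchingInvOn {a, b}ᶜ F :=
  forall₃_congr fun _ _ _ => exists_isPerfectMatching_induce_iff

theorem Bicritical.exists_isMatchingInvOn (hbc : Bicritical G) {a b : V} (hab : a ≠ b) :
    ∃ F, G.IsMatchingInvOn {a, b}ᶜ F :=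
  bicritical_iff.mp hbc a b hab

theorem Bicritical.exists_isMatchingInvOn_univ [Fintype V] (hbc : Bicritical G)
    (hcard : 2 < Fintype.card V) : ∃ F, G.IsMatchingInvOn Set.univ F := by
  classical
  obtain ⟨a, b, p, hab, hap, hbp⟩ := Fintype.two_lt_card_iff.mp hcard
  obtain ⟨F₀, hF₀⟩ := hbc.exists_isMatchingInvOn hab
  have hpq : G.Adj p (F₀ p) := hF₀.adj p (by simp [hap.symm, hbp.symm])
  obtain ⟨F₁, hF₁⟩ := hbc.exists_isMatchingInvOn hpq.ne
  exact ⟨_, by simpa using (isMatchingInvOn_pair hpq).union hF₁ disjoint_compl_right⟩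

end Bicritical

section consQuadExt

variable {V : Type*} {G : SimpleGraph V} {u v x y : V}

theorem consQuadExt_adj_inl_inl {p q : V} :
    (consQuadExt G u v x y).Adj (inl p) (inl q) ↔ G.Adj p q := by
  rw [consQuadExt, fromEdgeSet_adj, show s(inl p, inl q) = Sym2.map inl s(p, q) from rfl,
    Set.mem_union, (Sym2.map.injective inl_injective).mem_set_image]
  simpa using Adj.ne

theorem consQuadExt_adj_inr_not (c : Bool) :
    (consQuadExt G u v x y).Adj (inr c) (inr !c) := by
  cases c <;> simp [consQuadExt]

def consQuadExtInl : G ↪g consQuadExt G u v x y :=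
  ⟨Function.Embedding.inl, consQuadExt_adj_inl_inl⟩

@[simp]
theorem coe_consQuadExtInl : ⇑(consQuadExtInl : G ↪g consQuadExt G u v x y) = inl :=
  rfl

theorem consQuadExt_exists_adj_inr (hx : x ≠ u) (hy : y ≠ v) (c : Bool) (a : V) :
    ∃ w ≠ a, (consQuadExt G u v x y).Adj (inr c) (inl w) := by
  cases c
  · by_cases h : u = a
    · exact ⟨x, h ▸ hx, by simp [consQuadExt]⟩
    · exact ⟨u, h, by simp [consQuadExt]⟩
  · by_cases h : v = a
    · exact ⟨y, h ▸ hy, by simp [consQuadExt]⟩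
    · exact ⟨v, h, by simp [consQuadExt]⟩

theorem consQuadExt_exists_isMatchingInvOn_compl_inl_inl (hbc : Bicritical G) {a b : V}
    (hab : a ≠ b) : ∃ F, (consQuadExt G u v x y).IsMatchingInvOn {inl a, inl b}ᶜ F := by
  classical
  obtain ⟨F, hF⟩ := hbc.exists_isMatchingInvOn hab
  have hsplit :
      ({inl a, inl b}ᶜ : Set (V ⊕ Bool)) = inl '' {a, b}ᶜ ∪ {inr false, inr true} := by
    ext (p | c)
    · simp
    · cases c <;> simp
  rw [hsplit]
  exact ⟨_, (hF.image consQuadExtInl).union (isMatchingInvOn_pair (consQuadExt_adj_inr_not false))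
    (by simp [Set.disjoint_left])⟩

theorem consQuadExt_exists_isMatchingInvOn_compl_inr_inr [Fintype V] (hbc : Bicritical G)
    (hcard : 2 < Fintype.card V) (c : Bool) :
    ∃ F, (consQuadExt G u v x y).IsMatchingInvOn {inr c, inr !c}ᶜ F := by
  obtain ⟨F, hF⟩ := hbc.exists_isMatchingInvOn_univ hcard
  have hsplit : ({inr c, inr !c}ᶜ : Set (V ⊕ Bool)) = inl '' Set.univ := by
    ext (p | d)
    · simp
    · cases c <;> cases d <;> simp
  rw [hsplit]
  exact ⟨_, hF.image consQuadExtInl⟩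

theorem consQuadExt_exists_isMatchingInvOn_compl_inl_inr (hbc : Bicritical G) (hx : x ≠ u)
    (hy : y ≠ v) (a : V) (c : Bool) :
    ∃ F, (consQuadExt G u v x y).IsMatchingInvOn {inl a, inr c}ᶜ F := by
  classical
  obtain ⟨w, hwa, hw⟩ := consQuadExt_exists_adj_inr hx hy (!c) a
  obtain ⟨F, hF⟩ := hbc.exists_isMatchingInvOn hwa.symm
  have hsplit : ({inl a, inr c}ᶜ : Set (V ⊕ Bool)) = inl '' {a, w}ᶜ ∪ {inr !c, inl w} := by
    ext (p | d)
    · by_cases hp : p = w <;> simp [hp, hwa]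
    · cases c <;> cases d <;> simp
  rw [hsplit]
  exact ⟨_, (hF.image consQuadExtInl).union (isMatchingInvOn_pair hw)
    (Set.disjoint_left.mpr <| by rintro _ ⟨p, hp, rfl⟩; simp_all)⟩

end consQuadExt

theorem stmt_5_general {V : Type*} [Fintype V] (G : SimpleGraph V) (u v x y : V)
    (hcard : 4 ≤ Fintype.card V) (hbc : Bicritical G)
    (hx : x ≠ u) (hy : y ≠ v) :
    Bicritical (consQuadExt G u v x y) := by
  rw [bicritical_iff]
  rintro (a | c) (b | d) hab
  · exact consQuadExt_exists_isMatchingInvOn_compl_inl_inl hbc (inl_injective.ne_iff.mp hab)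
  · exact consQuadExt_exists_isMatchingInvOn_compl_inl_inr hbc hx hy a d
  · rw [Set.pair_comm]
    exact consQuadExt_exists_isMatchingInvOn_compl_inl_inr hbc hx hy b c
  · obtain rfl : d = !c := by cases c <;> cases d <;> simp_all
    exact consQuadExt_exists_isMatchingInvOn_compl_inr_inr hbc (by omega) c

theorem stmt_5 {V : Type*} [Fintype V] (G : SimpleGraph V) (u v x y : V)
    (hcard : 4 ≤ Fintype.card V) (hbc : Bicritical G)
    (huv : u ≠ v) (hadj : ¬ G.Adj u v)
    (hx : x ≠ u) (hy : y ≠ v) (hne : ({u, v} : Set V) ≠ {x, y}) :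
    Bicritical (consQuadExt G u v x y) :=
  stmt_5_general G u v x y hcard hbc hx hy
end

section
/- Let G be a brick (a 3-connected bicritical graph) and let G' be a conservative-quadratic extension of G with new vertices u', v'. Then G' is a brick. -/
open SimpleGraph Sum

/-!
The new vertices `u' = inr false` and `v' = inr true` are adjacent, each has two distinct old
neighbours (`u, x` and `v, y`), and the two pairs differ. After deleting at most two vertices,
the old vertices left are still connected because `G` is 3-connected, and a surviving new vertex
reaches one of them: directly, or, if both its old neighbours are deleted, through the other new
vertex, whose old neighbours cannot also both be deleted.

Every perfect matching needed for bicriticality is a perfect matching of `G` minus two vertices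
plus one edge: `u'v'` when both deleted vertices are old; an edge from the surviving new vertex
to an old neighbour `p` other than the deleted old vertex `b` (use `G - p - b`) when one is new;
any edge `cd` of `G` (use `G - c - d`) when both are new.
-/

open Function

namespace SimpleGraph

variable {V W : Type*}

/-- Encodes a perfect matching of `H.induce S` without subgraphs of a graph on a subtype:
`f` swaps the two ends of each matching edge. -/
def IsMatchingInvolution (H : SimpleGraph W) (S : Set W) (f : W → W) : Prop :=
  ∀ z ∈ S, f z ∈ S ∧ f (f z) = z ∧ H.Adj z (f z)

theorem exists_isPerfectMatching_induce_iff_s6 {H : SimpleGraph W} {S : Set W} :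
    (∃ M : (H.induce S).Subgraph, M.IsPerfectMatching) ↔ ∃ f, H.IsMatchingInvolution S f := by
  classical
  constructor
  · rintro ⟨M, hM⟩
    choose g hg hg_unique using Subgraph.isPerfectMatching_iff.mp hM
    refine ⟨fun z => if hz : z ∈ S then g ⟨z, hz⟩ else z, fun z hz => ?_⟩
    simp only [dif_pos hz, dif_pos (g ⟨z, hz⟩).2]
    exact ⟨(g _).2, congrArg Subtype.val (hg_unique _ _ (M.adj_symm (hg _))).symm,
      M.adj_sub (hg ⟨z, hz⟩)⟩
  · rintro ⟨f, hf⟩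
    let K : SimpleGraph S :=
      { Adj a b := (b : W) = f a
        symm := ⟨fun a b (h : (b : W) = f a) => by simp only [h, (hf a a.2).2.1]⟩
        loopless := ⟨fun a h => (hf a a.2).2.2.ne h⟩ }
    have hK : K ≤ H.induce S := fun a b (h : (b : W) = f a) => by
      change H.Adj a b
      rw [h]
      exact (hf a a.2).2.2
    refine ⟨SimpleGraph.toSubgraph K hK,
      Subgraph.isPerfectMatching_iff.mpr fun a => ⟨⟨f a, (hf a a.2).1⟩, rfl, ?_⟩⟩
    exact fun b (h : (b : W) = f a) => Subtype.ext h

theorem IsMatchingInvolution.map {G : SimpleGraph V} {H : SimpleGraph W} {S : Set V} {f : V → V}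
    (hf : G.IsMatchingInvolution S f) (φ : G →g H) (hφ : Injective φ) :
    H.IsMatchingInvolution (φ '' S) (extend φ (φ ∘ f) id) := by
  rintro _ ⟨z, hz, rfl⟩
  obtain ⟨hfz, hffz, hadj⟩ := hf z hz
  have hext : ∀ w, extend φ (φ ∘ f) id (φ w) = φ (f w) := hφ.extend_apply _ _
  rw [hext, hext, hffz]
  exact ⟨⟨f z, hfz, rfl⟩, rfl, φ.map_adj hadj⟩

theorem IsMatchingInvolution.insert_insert {H : SimpleGraph W} {S : Set W} {f : W → W}
    [DecidableEq W] (hf : H.IsMatchingInvolution S f) {p q : W} (hpq : H.Adj p q)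
    (hp : p ∉ S) (hq : q ∉ S) :
    H.IsMatchingInvolution (insert p (insert q S)) (update (update f p q) q p) := by
  rintro z (rfl | rfl | hz)
  · simp [hpq.ne, hpq]
  · simp [hpq.ne, hpq.symm]
  · obtain ⟨hfz, hffz, hadj⟩ := hf z hz
    have hf' : ∀ w ∈ S, update (update f p q) q p w = f w := fun w hw => by
      rw [update_of_ne (ne_of_mem_of_not_mem hw hq), update_of_ne (ne_of_mem_of_not_mem hw hp)]
    rw [hf' z hz, hf' _ hfz, hffz]
    exact ⟨Or.inr (Or.inr hfz), rfl, hadj⟩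

end SimpleGraph

section Brick

variable {V W : Type*} {G : SimpleGraph V}

theorem Bicritical.exists_isPerfectMatching_induce_insert_insert {H : SimpleGraph W}
    (hG : Bicritical G) (φ : G →g H) (hφ : Injective φ) {p q : V} (hpq : p ≠ q) {e₁ e₂ : W}
    (he : H.Adj e₁ e₂) (he₁ : e₁ ∉ φ '' {p, q}ᶜ) (he₂ : e₂ ∉ φ '' {p, q}ᶜ) :
    ∃ M : (H.induce (insert e₁ (insert e₂ (φ '' {p, q}ᶜ)))).Subgraph, M.IsPerfectMatching := by
  classical
  obtain ⟨f, hf⟩ := exists_isPerfectMatching_induce_iff_s6.mp (hG p q hpq)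
  exact exists_isPerfectMatching_induce_iff_s6.mpr ⟨_, (hf.map φ hφ).insert_insert he he₁ he₂⟩

variable [Fintype V]

theorem ThreeConnected.exists_adj (hG : ThreeConnected G) (a : V) : ∃ b, G.Adj a b := by
  have : Nontrivial V := Fintype.one_lt_card_iff_nontrivial.mp (by linarith [hG.1])
  obtain ⟨b, hb⟩ := exists_ne a
  obtain ⟨w⟩ := (hG.2 ∅ (by simp)).preconnected ⟨a, by simp⟩ ⟨b, by simp⟩
  exact ⟨w.snd, w.adj_snd (w.not_nil_of_ne (by simpa using hb.symm))⟩

theorem ThreeConnected.reachable_induce_compl_map [Finite W] {H : SimpleGraph W}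
    (hG : ThreeConnected G) (φ : G →g H) (hφ : Injective φ) {S : Set W} (hS : S.ncard ≤ 2)
    {a b : V} (ha : φ a ∉ S) (hb : φ b ∉ S) :
    (H.induce Sᶜ).Reachable ⟨φ a, ha⟩ ⟨φ b, hb⟩ := by
  have hT : (φ ⁻¹' S).ncard ≤ 2 :=
    (Set.ncard_le_ncard_of_injOn φ (fun _ h => h) hφ.injOn).trans hS
  let ψ : G.induce (φ ⁻¹' S)ᶜ →g H.induce Sᶜ := ⟨fun z => ⟨φ z, z.2⟩, φ.map_adj⟩
  exact ((hG.2 _ hT).preconnected ⟨a, ha⟩ ⟨b, hb⟩).map ψ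

end Brick

namespace consQuadExt

variable {V : Type*} {G : SimpleGraph V} {u v x y : V}

def inlHom : G →g consQuadExt G u v x y where
  toFun := inl
  map_rel' h := (fromEdgeSet_adj _).mpr ⟨.inl ⟨s(_, _), h, rfl⟩, by simpa using h.ne⟩

@[simp]
theorem coe_inlHom : ⇑(inlHom : G →g consQuadExt G u v x y) = inl := rfl

theorem inr_adj_inr_not (b : Bool) : (consQuadExt G u v x y).Adj (inr b) (inr !b) := by
  cases b <;> simp [consQuadExt]

def baseNbrs (u v x y : V) : Bool → Set V
  | false => {u, x}
  | true => {v, y}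

theorem inr_adj_inl {b : Bool} {w : V} (hw : w ∈ baseNbrs u v x y b) :
    (consQuadExt G u v x y).Adj (inr b) (inl w) := by
  cases b <;> rcases hw with rfl | rfl <;> simp [consQuadExt]

theorem ncard_baseNbrs (hx : x ≠ u) (hy : y ≠ v) (b : Bool) :
    (baseNbrs u v x y b).ncard = 2 := by
  cases b
  exacts [Set.ncard_pair hx.symm, Set.ncard_pair hy.symm]

theorem baseNbrs_not_ne (huv : u ≠ v) (hne : ({u, v} : Set V) ≠ {x, y}) (b : Bool) :
    baseNbrs u v x y (!b) ≠ baseNbrs u v x y b := by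
  have key : baseNbrs u v x y false ≠ baseNbrs u v x y true := by
    simp only [baseNbrs, ne_eq, Set.pair_eq_pair_iff] at hne ⊢
    tauto
  cases b
  exacts [key.symm, key]

theorem exists_reachable_inl [Finite V] (huv : u ≠ v) (hx : x ≠ u) (hy : y ≠ v)
    (hne : ({u, v} : Set V) ≠ {x, y}) {S : Set (V ⊕ Bool)} (hS : S.ncard ≤ 2) (z : V ⊕ Bool)
    (hz : z ∉ S) :
    ∃ w, ∃ hw : inl w ∉ S, ((consQuadExt G u v x y).induce Sᶜ).Reachable ⟨z, hz⟩ ⟨inl w, hw⟩ := by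
  have reach {z₁ z₂ : V ⊕ Bool} (h₁ : z₁ ∉ S) (h₂ : z₂ ∉ S)
      (h : (consQuadExt G u v x y).Adj z₁ z₂) :
      ((consQuadExt G u v x y).induce Sᶜ).Reachable ⟨z₁, h₁⟩ ⟨z₂, h₂⟩ :=
    Adj.reachable h
  rcases z with w | b
  · exact ⟨w, hz, .rfl⟩
  by_cases hN : ∃ w ∈ baseNbrs u v x y b, inl w ∉ S
  · obtain ⟨w, hwN, hw⟩ := hN
    exact ⟨w, hw, reach hz hw (inr_adj_inl hwN)⟩
  push Not at hN
  have hS_eq : S = inl '' baseNbrs u v x y b := by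
    refine (Set.eq_of_subset_of_ncard_le (Set.image_subset_iff.mpr hN) ?_).symm
    rwa [Set.ncard_image_of_injective _ inl_injective, ncard_baseNbrs hx hy]
  have hb' : inr (!b) ∉ S := by simp [hS_eq]
  obtain ⟨w, hwN, hw⟩ : ∃ w ∈ baseNbrs u v x y (!b), inl w ∉ S := by
    by_contra! h
    refine baseNbrs_not_ne huv hne b (Set.eq_of_subset_of_ncard_le (fun w hw => ?_) ?_)
    · simpa [hS_eq] using h w hw
    · rw [ncard_baseNbrs hx hy, ncard_baseNbrs hx hy]
  exact ⟨w, hw, (reach hz hb' (inr_adj_inr_not b)).trans (reach hb' hw (inr_adj_inl hwN))⟩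

theorem threeConnected [Fintype V] (hG : ThreeConnected G) (huv : u ≠ v) (hx : x ≠ u)
    (hy : y ≠ v) (hne : ({u, v} : Set V) ≠ {x, y}) : ThreeConnected (consQuadExt G u v x y) := by
  refine ⟨by simp only [Fintype.card_sum, Fintype.card_bool]; linarith [hG.1], fun S hS => ?_⟩
  obtain ⟨_, ⟨w₀, rfl⟩, hw₀⟩ : ∃ z ∈ Set.range (inl : V → V ⊕ Bool), z ∉ S := by
    refine Set.exists_mem_notMem_of_ncard_lt_ncard ?_
    rw [Set.ncard_range_of_injective inl_injective, Nat.card_eq_fintype_card]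
    linarith [hG.1]
  refine (connected_iff_exists_forall_reachable _).mpr ⟨⟨inl w₀, hw₀⟩, fun ⟨z, hz⟩ => ?_⟩
  obtain ⟨w, hw, hzw⟩ := exists_reachable_inl huv hx hy hne hS z hz
  exact (hG.reachable_induce_compl_map inlHom inl_injective hS hw₀ hw).trans hzw.symm

theorem bicritical [Fintype V] (hG3 : ThreeConnected G) (hG : Bicritical G) (hx : x ≠ u)
    (hy : y ≠ v) : Bicritical (consQuadExt G u v x y) := by
  have mixed (r : Bool) (b : V) : ∃ M : ((consQuadExt G u v x y).induce
      ({inr r, inl b}ᶜ : Set (V ⊕ Bool))).Subgraph, M.IsPerfectMatching := by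
    obtain ⟨p, hp, hpb⟩ := Set.exists_ne_of_one_lt_ncard
      (by rw [ncard_baseNbrs hx hy (!r)]; norm_num) b
    have hset : ({inr r, inl b}ᶜ : Set (V ⊕ Bool)) =
        insert (inr !r) (insert (inl p) (inl '' {p, b}ᶜ)) := by
      ext (w | c)
      · by_cases w = p <;> simp_all
      · cases r <;> cases c <;> simp
    rw [hset]
    exact hG.exists_isPerfectMatching_induce_insert_insert inlHom inl_injective
      hpb (inr_adj_inl hp) (by simp) (by simp)
  rintro (a | r) (b | s) hab
  · have hset : ({inl a, inl b}ᶜ : Set (V ⊕ Bool)) =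
        insert (inr false) (insert (inr true) (inl '' {a, b}ᶜ)) := by
      ext (w | c) <;> simp
    rw [hset]
    exact hG.exists_isPerfectMatching_induce_insert_insert inlHom inl_injective
      (fun h => hab (congrArg inl h)) (inr_adj_inr_not false) (by simp) (by simp)
  · rw [Set.pair_comm]
    exact mixed s a
  · exact mixed r b
  · obtain ⟨c, d, hcd⟩ : ∃ c d, G.Adj c d := ⟨u, hG3.exists_adj u⟩
    have hset : ({inr r, inr s}ᶜ : Set (V ⊕ Bool)) =
        insert (inl c) (insert (inl d) (inl '' {c, d}ᶜ)) := by
      ext (w | t)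
      · by_cases w = c <;> by_cases w = d <;> simp_all
      · cases r <;> cases s <;> cases t <;> simp_all
    rw [hset]
    exact hG.exists_isPerfectMatching_induce_insert_insert inlHom inl_injective
      hcd.ne (inlHom.map_adj hcd) (by simp) (by simp)

end consQuadExt

theorem stmt_6_general {V : Type*} [Fintype V] (G : SimpleGraph V) (u v x y : V)
    (hbrick : ThreeConnected G ∧ Bicritical G)
    (huv : u ≠ v) (hx : x ≠ u) (hy : y ≠ v) (hne : ({u, v} : Set V) ≠ {x, y}) :
    ThreeConnected (consQuadExt G u v x y) ∧
      Bicritical (consQuadExt G u v x y) :=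
  ⟨consQuadExt.threeConnected hbrick.1 huv hx hy hne,
    consQuadExt.bicritical hbrick.1 hbrick.2 hx hy⟩

theorem stmt_6 {V : Type*} [Fintype V] (G : SimpleGraph V) (u v x y : V)
    (hbrick : ThreeConnected G ∧ Bicritical G)
    (huv : u ≠ v) (hadj : ¬ G.Adj u v)
    (hx : x ≠ u) (hy : y ≠ v) (hne : ({u, v} : Set V) ≠ {x, y}) :
    ThreeConnected (consQuadExt G u v x y) ∧
      Bicritical (consQuadExt G u v x y) :=
  stmt_6_general G u v x y hbrick huv hx hy hne
end

section
/- If a graph G on at least 6 vertices is 3-connected and G' is obtained from G by a quasiquartic extension (delete the edges uv and xy if present, add four new vertices u', v', x', y' forming the 4-cycle u'v'y'x'u', and add the edges uu', vv', xx', yy', where u ≠ v, x ≠ y, u ≠ y, v ≠ x, {u,v} ≠ {x,y}), then G' is 3-connected. -/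
open SimpleGraph Sum

/-- Quasiquartic extension: delete the edges `uv` and `xy` (if present), add the
new vertices `u' = inr 0`, `v' = inr 1`, `y' = inr 2`, `x' = inr 3` forming the
4-cycle `u'v'y'x'u'`, and join `u'` to `u`, `v'` to `v`, `x'` to `x`, `y'` to `y`. -/
def quasiQuarticExt {V : Type*} (G : SimpleGraph V) (u v x y : V) :
    SimpleGraph (V ⊕ Fin 4) :=
  SimpleGraph.fromEdgeSet
    ((Sym2.map inl '' G.edgeSet \
        {s((inl u : V ⊕ Fin 4), inl v), s((inl x : V ⊕ Fin 4), inl y)}) ∪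
      {s((inr 0 : V ⊕ Fin 4), inr 1), s((inr 1 : V ⊕ Fin 4), inr 2),
       s((inr 2 : V ⊕ Fin 4), inr 3), s((inr 3 : V ⊕ Fin 4), inr 0),
       s(inl u, (inr 0 : V ⊕ Fin 4)), s(inl v, (inr 1 : V ⊕ Fin 4)),
       s(inl x, (inr 3 : V ⊕ Fin 4)), s(inl y, (inr 2 : V ⊕ Fin 4))})

/-!
Let `S` be a set of at most two vertices of the extension. If `S` contains no old vertex, the old
vertices stay connected because a 3-connected graph survives the deletion of any two edges, and
every new vertex hangs on its anchor, its neighbour among `u, v, x, y`. Otherwise at most one new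
vertex is removed, so the new vertices left are joined along the 4-cycle. Every surviving old
vertex reaches an anchor along a path of `G - S` stopped at the first anchor it meets, which uses
no deleted edge. A surviving anchor is adjacent to a surviving new vertex, unless its only new
neighbour was removed; then minimum degree three gives it a neighbour off its deleted edge and off
`S`, which in turn reaches another anchor.
-/

namespace SimpleGraph

variable {V W : Type*} {G : SimpleGraph V} {G' : SimpleGraph W} {s : Set V} {t : Set W}
  {a b c : V}

def ReachableIn (G : SimpleGraph V) (s : Set V) (a b : V) : Prop :=
  ∃ (ha : a ∈ s) (hb : b ∈ s), (G.induce s).Reachable ⟨a, ha⟩ ⟨b, hb⟩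

theorem Adj.reachableIn (h : G.Adj a b) (ha : a ∈ s) (hb : b ∈ s) : G.ReachableIn s a b :=
  ⟨ha, hb, Adj.reachable (G := G.induce s) h⟩

namespace ReachableIn

theorem refl (ha : a ∈ s) : G.ReachableIn s a a := ⟨ha, ha, .rfl⟩

theorem symm : G.ReachableIn s a b → G.ReachableIn s b a
  | ⟨ha, hb, h⟩ => ⟨hb, ha, h.symm⟩

theorem trans : G.ReachableIn s a b → G.ReachableIn s b c → G.ReachableIn s a c
  | ⟨ha, _, hab⟩, ⟨_, hc, hbc⟩ => ⟨ha, hc, hab.trans hbc⟩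

theorem mem_left : G.ReachableIn s a b → a ∈ s
  | ⟨ha, _, _⟩ => ha

theorem map (φ : G →g G') (hφ : Set.MapsTo φ s t) :
    G.ReachableIn s a b → G'.ReachableIn t (φ a) (φ b)
  | ⟨ha, hb, h⟩ => ⟨hφ ha, hφ hb, h.map (induceHom φ hφ)⟩

theorem exists_deleteEdges (F : Set (Sym2 V)) (h : G.ReachableIn s a b) :
    ∃ p, (G.deleteEdges F).ReachableIn s a p ∧ (p = b ∨ ∃ e ∈ F, p ∈ e) := by
  obtain ⟨_, _, ⟨w⟩⟩ := h
  suffices key : ∀ {a' b' : s} (w : (G.induce s).Walk a' b'),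
      ∃ p, (G.deleteEdges F).ReachableIn s a' p ∧ (p = b' ∨ ∃ e ∈ F, p ∈ e) from key w
  intro a' b' w
  induction w with
  | nil => exact ⟨_, refl (Subtype.prop _), Or.inl rfl⟩
  | @cons a c _ hac w ih =>
    by_cases he : s(a.1, c.1) ∈ F
    · exact ⟨a, refl a.2, Or.inr ⟨_, he, Sym2.mem_mk_left _ _⟩⟩
    · obtain ⟨p, hcp, hp⟩ := ih
      have hac' : (G.deleteEdges F).Adj a c := deleteEdges_adj.2 ⟨hac, he⟩
      exact ⟨p, (hac'.reachableIn a.2 c.2).trans hcp, hp⟩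

end ReachableIn

theorem Reachable.reachableIn_map (φ : G →g G') (hφ : ∀ z, φ z ∈ t) (h : G.Reachable a b) :
    G'.ReachableIn t (φ a) (φ b) :=
  ⟨hφ a, hφ b, h.map (⟨fun z => ⟨φ z, hφ z⟩, φ.map_rel⟩ : G →g G'.induce t)⟩

theorem Connected.reachableIn (h : (G.induce s).Connected) (ha : a ∈ s) (hb : b ∈ s) :
    G.ReachableIn s a b :=
  ⟨ha, hb, h ⟨a, ha⟩ ⟨b, hb⟩⟩

theorem connected_induce_of_forall_reachableIn (hc : c ∈ s)
    (h : ∀ a ∈ s, G.ReachableIn s a c) : (G.induce s).Connected := by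
  rw [connected_iff_exists_forall_reachable]
  exact ⟨⟨c, hc⟩, fun ⟨a, ha⟩ => (h a ha).symm.2.2⟩

end SimpleGraph

theorem Set.ncard_pair_le {α : Type*} (a b : α) : ({a, b} : Set α).ncard ≤ 2 :=
  (Set.ncard_insert_le a {b}).trans (by simp)

theorem Set.eq_empty_or_exists_eq_pair_of_ncard_le_two {α : Type*} [Finite α] {S : Set α}
    (hS : S.ncard ≤ 2) : S = ∅ ∨ ∃ a b, S = {a, b} := by
  interval_cases h : S.ncard
  · exact Or.inl ((Set.ncard_eq_zero (hs := S.toFinite)).1 h)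
  · obtain ⟨a, rfl⟩ := Set.ncard_eq_one.1 h
    exact Or.inr ⟨a, a, by simp⟩
  · obtain ⟨a, b, -, rfl⟩ := Set.ncard_eq_two.1 h
    exact Or.inr ⟨a, b, rfl⟩

namespace ThreeConnected

variable {V : Type*} [Fintype V] {G : SimpleGraph V}

theorem reachableIn (h3 : ThreeConnected G) {T : Set V} (hT : T.ncard ≤ 2) {a b : V}
    (ha : a ∉ T) (hb : b ∉ T) : G.ReachableIn Tᶜ a b :=
  (h3.2 T hT).reachableIn ha hb

theorem exists_ne_ne_ne (h3 : ThreeConnected G) (a b c : V) :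
    ∃ z, z ≠ a ∧ z ≠ b ∧ z ≠ c := by
  classical
  obtain ⟨z, -, hz⟩ := Finset.exists_mem_notMem_of_card_lt_card (s := {a, b, c})
    (t := Finset.univ) (Finset.card_le_three.trans_lt (by simpa [Nat.lt_iff_add_one_le] using h3.1))
  simp only [Finset.mem_insert, Finset.mem_singleton, not_or] at hz
  exact ⟨z, hz⟩

theorem exists_adj_ne (h3 : ThreeConnected G) (a b c : V) :
    ∃ n, G.Adj a n ∧ n ≠ b ∧ n ≠ c := by
  obtain ⟨z, hza, hzb, hzc⟩ := h3.exists_ne_ne_ne a b c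
  set T : Set V := {b, c} \ {a} with hT
  have hTcard : T.ncard ≤ 2 :=
    (Set.ncard_le_ncard Set.sdiff_subset).trans (Set.ncard_pair_le b c)
  obtain ⟨_, _, ⟨w⟩⟩ := h3.reachableIn hTcard (a := a) (b := z) (by simp [hT])
    (by simp [hT, hzb, hzc])
  have hw : ¬ w.Nil := Walk.not_nil_of_ne (by simpa using hza.symm)
  have hadj : G.Adj a w.snd := w.adj_snd hw
  have hn : (w.snd : V) ∉ T := w.snd.2
  simp only [hT, Set.mem_sdiff, Set.mem_insert_iff, Set.mem_singleton_iff, not_and,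
    not_not] at hn
  exact ⟨w.snd, hadj, fun h => hadj.ne (hn (Or.inl h)).symm,
    fun h => hadj.ne (hn (Or.inr h)).symm⟩

theorem exists_adj_deleteEdges (h3 : ThreeConnected G) (a b c d : V) :
    ∃ n, n ≠ a ∧ n ≠ c ∧ (G.deleteEdges {s(a, b), s(c, d)}).Adj a n := by
  by_cases hac : a = c
  · subst hac
    obtain ⟨n, han, hnb, hnd⟩ := h3.exists_adj_ne a b d
    exact ⟨n, han.ne', han.ne', han, by simp [hnb, hnd, han.ne']⟩
  · obtain ⟨n, han, hnb, hnc⟩ := h3.exists_adj_ne a b c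
    exact ⟨n, han.ne', hnc, han, by simp [hnb, hnc, hac, han.ne']⟩

/-- Removing the vertices `a` and `c` leaves a connected graph containing neither deleted edge,
and `a`, `c` themselves keep a neighbour outside `{a, c}` along an undeleted edge. -/
theorem connected_deleteEdges (h3 : ThreeConnected G) (a b c d : V) :
    (G.deleteEdges {s(a, b), s(c, d)}).Connected := by
  set G' := G.deleteEdges {s(a, b), s(c, d)}
  have hout : ∀ z z', z ∉ ({a, c} : Set V) → z' ∉ ({a, c} : Set V) →
      G'.Reachable z z' := by
    intro z z' hz hz'
    obtain ⟨_, _, h⟩ := h3.reachableIn (Set.ncard_pair_le a c) hz hz'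
    refine h.map ⟨Subtype.val, fun {p q} hpq => deleteEdges_adj.2 ⟨hpq, ?_⟩⟩
    have hp : (p : V) ∉ ({a, c} : Set V) := p.2
    have hq : (q : V) ∉ ({a, c} : Set V) := q.2
    simp only [Set.mem_insert_iff, Set.mem_singleton_iff, not_or] at hp hq
    simp [hp.1, hp.2, hq.1, hq.2]
  obtain ⟨z₀, hz₀a, hz₀c, -⟩ := h3.exists_ne_ne_ne a c c
  have hz₀ : z₀ ∉ ({a, c} : Set V) := by simp [hz₀a, hz₀c]
  refine (connected_iff_exists_forall_reachable _).2 ⟨z₀, fun z => ?_⟩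
  by_cases hza : z = a
  · obtain ⟨n, hna, hnc, hadj⟩ := h3.exists_adj_deleteEdges a b c d
    exact (hout z₀ n hz₀ (by simp [hna, hnc])).trans (hza ▸ hadj.reachable.symm)
  by_cases hzc : z = c
  · obtain ⟨n, hnc, hna, hadj⟩ := h3.exists_adj_deleteEdges c d a b
    rw [Set.pair_comm] at hadj
    exact (hout z₀ n hz₀ (by simp [hna, hnc])).trans (hzc ▸ hadj.reachable.symm)
  exact hout z₀ z hz₀ (by simp [hza, hzc])

end ThreeConnected

namespace quasiQuarticExt

variable {V : Type*} {G : SimpleGraph V} {u v x y : V}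

/-- The old neighbour of the new vertex `inr i` (recall `y' = inr 2` and `x' = inr 3`). -/
def anchor (u v x y : V) : Fin 4 → V := ![u, v, y, x]

theorem adj_inl_inl {a b : V} :
    (quasiQuarticExt G u v x y).Adj (inl a) (inl b) ↔
      (G.deleteEdges {s(u, v), s(x, y)}).Adj a b := by
  have hedge : (∃ e ∈ G.edgeSet, Sym2.map (inl : V → V ⊕ Fin 4) e = s(inl a, inl b)) ↔
      G.Adj a b := by
    rw [← Sym2.map_mk, ← Set.mem_image, (Sym2.map.injective inl_injective).mem_set_image,
      mem_edgeSet]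
  simp only [quasiQuarticExt, fromEdgeSet_adj, deleteEdges_adj, Set.mem_union, Set.mem_sdiff,
    Set.mem_image, hedge]
  simpa using fun h _ _ _ _ => h.ne

theorem adj_anchor (i : Fin 4) :
    (quasiQuarticExt G u v x y).Adj (inl (anchor u v x y i)) (inr i) := by
  fin_cases i <;> simp [quasiQuarticExt, anchor]

theorem adj_inr_add_one (i : Fin 4) : (quasiQuarticExt G u v x y).Adj (inr i) (inr (i + 1)) := by
  fin_cases i <;> simp [quasiQuarticExt]

def inlHom (G : SimpleGraph V) (u v x y : V) :
    G.deleteEdges {s(u, v), s(x, y)} →g quasiQuarticExt G u v x y :=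
  ⟨inl, adj_inl_inl.2⟩

theorem exists_anchor_eq_of_mem {p : V} {e : Sym2 V}
    (he : e ∈ ({s(u, v), s(x, y)} : Set (Sym2 V))) (hp : p ∈ e) :
    ∃ i, anchor u v x y i = p := by
  simp only [Set.mem_insert_iff, Set.mem_singleton_iff] at he
  rcases he with rfl | rfl <;> rcases Sym2.mem_iff.1 hp with rfl | rfl
  exacts [⟨0, rfl⟩, ⟨1, rfl⟩, ⟨3, rfl⟩, ⟨2, rfl⟩]

theorem exists_anchor_ne (huv : u ≠ v) (huy : u ≠ y) (hvx : v ≠ x)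
    (hne : ({u, v} : Set V) ≠ {x, y}) (a b : V) :
    ∃ i, anchor u v x y i ≠ a ∧ anchor u v x y i ≠ b := by
  by_contra! h
  have hmem : ∀ i, anchor u v x y i = a ∨ anchor u v x y i = b :=
    fun i => or_iff_not_imp_left.2 (h i)
  have hu := hmem 0
  have hv := hmem 1
  have hy := hmem 2
  have hx := hmem 3
  simp only [anchor, Matrix.cons_val] at hu hv hx hy
  apply hne
  rcases hu with rfl | rfl <;> rcases hv with rfl | rfl <;> rcases hx with rfl | rfl <;>
    rcases hy with rfl | rfl <;> simp_all [Set.pair_comm]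

theorem anchor_shared_or_exists_partner (huy : u ≠ y) (hvx : v ≠ x) (i : Fin 4) :
    (∃ j ≠ i, anchor u v x y j = anchor u v x y i) ∨
      ∃ p, ∀ n, s(anchor u v x y i, n) ∈ ({s(u, v), s(x, y)} : Set (Sym2 V)) → n = p := by
  fin_cases i
  · by_cases hux : u = x
    · exact Or.inl ⟨3, by decide, by simp [anchor, hux]⟩
    · exact Or.inr ⟨v, fun n hn => by simp [anchor] at hn; aesop⟩
  · by_cases hvy : v = y
    · exact Or.inl ⟨2, by decide, by simp [anchor, hvy]⟩
    · exact Or.inr ⟨u, fun n hn => by simp [anchor] at hn; aesop⟩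
  · by_cases hvy : v = y
    · exact Or.inl ⟨1, by decide, by simp [anchor, hvy]⟩
    · exact Or.inr ⟨x, fun n hn => by simp [anchor] at hn; aesop⟩
  · by_cases hux : u = x
    · exact Or.inl ⟨0, by decide, by simp [anchor, hux]⟩
    · exact Or.inr ⟨y, fun n hn => by simp [anchor] at hn; aesop⟩

variable {S : Set (V ⊕ Fin 4)}

theorem reachableIn_inr {r i j : Fin 4} (hR : inr ⁻¹' S ⊆ {r}) (hi : inr i ∉ S)
    (hj : inr j ∉ S) : (quasiQuarticExt G u v x y).ReachableIn Sᶜ (inr i) (inr j) := by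
  have alive : ∀ k, k ≠ r → inr k ∈ Sᶜ := fun k hk h => hk (hR h)
  have step : ∀ k, inr k ∈ Sᶜ → inr (k + 1) ∈ Sᶜ →
      (quasiQuarticExt G u v x y).ReachableIn Sᶜ (inr k) (inr (k + 1)) :=
    fun k hk hk' => (adj_inr_add_one k).reachableIn hk hk'
  have hfin : ∀ r : Fin 4, r + 1 ≠ r ∧ r + 1 + 1 ≠ r := by decide
  obtain ⟨hr1, hr2⟩ := hfin r
  suffices key : ∀ k, inr k ∉ S →
      (quasiQuarticExt G u v x y).ReachableIn Sᶜ (inr k) (inr (r + 1 + 1)) from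
    (key i hi).trans (key j hj).symm
  intro k hk
  have hcover : ∀ r k : Fin 4, k = r ∨ k = r + 1 ∨ k = r + 1 + 1 ∨ k = r + 1 + 1 + 1 := by
    decide
  obtain rfl | rfl | rfl | rfl := hcover r k
  · exact (step _ hk (alive _ hr1)).trans (step _ (alive _ hr1) (alive _ hr2))
  · exact step _ hk (alive _ hr2)
  · exact .refl hk
  · exact (step _ (alive _ hr2) hk).symm

variable [Fintype V]

/-- Follow a path of `G - {a, b}` towards an anchor until it first meets an anchor: no deleted
edge is used on the way, since both deleted edges join two anchors. -/
theorem exists_reachableIn_anchor (h3 : ThreeConnected G) (huv : u ≠ v) (huy : u ≠ y)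
    (hvx : v ≠ x) (hne : ({u, v} : Set V) ≠ {x, y}) {a b c : V} (hS : inl ⁻¹' S ⊆ {a, b})
    (hc : c ∉ ({a, b} : Set V)) :
    ∃ i, anchor u v x y i ∉ ({a, b} : Set V) ∧
      (quasiQuarticExt G u v x y).ReachableIn Sᶜ (inl c) (inl (anchor u v x y i)) := by
  obtain ⟨i₀, hi₀a, hi₀b⟩ := exists_anchor_ne huv huy hvx hne a b
  obtain ⟨p, hcp, hp⟩ := (h3.reachableIn (Set.ncard_pair_le a b) hc
    (b := anchor u v x y i₀) (by simp [hi₀a, hi₀b])).exists_deleteEdges {s(u, v), s(x, y)}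
  obtain ⟨i, rfl⟩ : ∃ i, anchor u v x y i = p := by
    rcases hp with rfl | ⟨e, he, hpe⟩
    exacts [⟨i₀, rfl⟩, exists_anchor_eq_of_mem he hpe]
  have hmaps : Set.MapsTo (inlHom G u v x y) ({a, b} : Set V)ᶜ Sᶜ := fun _ hz hzS => hz (hS hzS)
  exact ⟨i, hcp.symm.mem_left, hcp.map _ hmaps⟩

theorem connected_induce_of_forall_inl_notMem (h3 : ThreeConnected G) (hS : ∀ a, inl a ∉ S) :
    ((quasiQuarticExt G u v x y).induce Sᶜ).Connected := by
  have hV : ∀ a, (quasiQuarticExt G u v x y).ReachableIn Sᶜ (inl a) (inl u) := fun a =>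
    ((h3.connected_deleteEdges u v x y).preconnected a u).reachableIn_map (inlHom G u v x y) hS
  refine connected_induce_of_forall_reachableIn (hS u) fun z hz => ?_
  cases z with
  | inl a => exact hV a
  | inr i => exact ((adj_anchor i).symm.reachableIn hz (hS _)).trans (hV _)

theorem connected_induce_of_preimage_inr_subset_singleton (h3 : ThreeConnected G) (huv : u ≠ v)
    (huy : u ≠ y) (hvx : v ≠ x) (hne : ({u, v} : Set V) ≠ {x, y}) {r : Fin 4} {a b : V}
    (hR : inr ⁻¹' S ⊆ {r}) (hS : inl ⁻¹' S = {a, b})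
    (hanchor : ∀ i, inl (anchor u v x y i) ∉ S →
      ∃ j, (quasiQuarticExt G u v x y).ReachableIn Sᶜ (inl (anchor u v x y i)) (inr j)) :
    ((quasiQuarticExt G u v x y).induce Sᶜ).Connected := by
  have hr : inr (r + 1) ∈ Sᶜ := fun h => absurd (hR h) (by simp)
  refine connected_induce_of_forall_reachableIn hr fun z hz => ?_
  cases z with
  | inr i => exact reachableIn_inr hR hz hr
  | inl c =>
    have hc : c ∉ ({a, b} : Set V) := hS ▸ hz
    obtain ⟨i, hi, hci⟩ := exists_reachableIn_anchor h3 huv huy hvx hne hS.subset hc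
    obtain ⟨j, hj⟩ := hanchor i (show anchor u v x y i ∉ inl ⁻¹' S from hS ▸ hi)
    exact hci.trans (hj.trans (reachableIn_inr hR hj.symm.mem_left hr))

/-- When the anchor of the removed new vertex survives but has no other new neighbour, it lies on
a single deleted edge; since `G` has minimum degree three, it has a neighbour avoiding both that
edge and the removed old vertex, from which an anchor of a surviving new vertex is reached. -/
theorem connected_induce_pair_inl_inr (h3 : ThreeConnected G) (huv : u ≠ v) (huy : u ≠ y)
    (hvx : v ≠ x) (hne : ({u, v} : Set V) ≠ {x, y}) (w : V) (r : Fin 4) :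
    ((quasiQuarticExt G u v x y).induce {inl w, inr r}ᶜ).Connected := by
  have alive : ∀ k, k ≠ r → inr k ∈ ({inl w, inr r}ᶜ : Set (V ⊕ Fin 4)) := by simp
  refine connected_induce_of_preimage_inr_subset_singleton h3 huv huy hvx hne (r := r) (a := w)
    (b := w) (by intro k; simp +contextual) (by ext; simp) fun i hi => ?_
  by_cases hir : i ≠ r
  · exact ⟨i, (adj_anchor i).reachableIn hi (alive i hir)⟩
  rw [not_not] at hir
  subst hir
  rcases anchor_shared_or_exists_partner huy hvx i with ⟨j, hji, hj⟩ | ⟨p, hp⟩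
  · exact ⟨j, hj ▸ (adj_anchor j).reachableIn (hj ▸ hi) (alive j hji)⟩
  obtain ⟨n, hadj, hnp, hnw⟩ := h3.exists_adj_ne (anchor u v x y i) p w
  have hn : (quasiQuarticExt G u v x y).Adj (inl (anchor u v x y i)) (inl n) :=
    adj_inl_inl.2 (deleteEdges_adj.2 ⟨hadj, fun h => hnp (hp n h)⟩)
  obtain ⟨k, hk, hnk⟩ := exists_reachableIn_anchor h3 huv huy hvx hne
    (S := {inl w, inr i}) (a := anchor u v x y i) (b := w) (c := n) (by intro z; simp +contextual)
    (by simp [hnw, hadj.ne'])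
  have hki : k ≠ i := by rintro rfl; simp at hk
  exact ⟨k, (hn.reachableIn hi (by simpa using hnw)).trans
    (hnk.trans ((adj_anchor k).reachableIn hnk.symm.mem_left (alive k hki)))⟩

end quasiQuarticExt

theorem stmt_19_general {V : Type*} [Fintype V] (G : SimpleGraph V) (u v x y : V)
    (h3 : ThreeConnected G)
    (huv : u ≠ v) (huy : u ≠ y) (hvx : v ≠ x)
    (hne : ({u, v} : Set V) ≠ {x, y}) :
    ThreeConnected (quasiQuarticExt G u v x y) := by
  refine ⟨by simp, fun S hS => ?_⟩
  rcases Set.eq_empty_or_exists_eq_pair_of_ncard_le_two hS with rfl | ⟨s₁, s₂, rfl⟩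
  · exact quasiQuarticExt.connected_induce_of_forall_inl_notMem h3 (by simp)
  rcases s₁ with a | i <;> rcases s₂ with b | j
  · exact quasiQuarticExt.connected_induce_of_preimage_inr_subset_singleton h3 huv huy hvx hne
      (r := 0) (a := a) (b := b) (by intro k; simp) (by ext; simp)
      fun i hi => ⟨i, (quasiQuarticExt.adj_anchor i).reachableIn hi (by simp)⟩
  · exact quasiQuarticExt.connected_induce_pair_inl_inr h3 huv huy hvx hne a j
  · rw [Set.pair_comm]
    exact quasiQuarticExt.connected_induce_pair_inl_inr h3 huv huy hvx hne b i
  · exact quasiQuarticExt.connected_induce_of_forall_inl_notMem h3 (by simp)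

theorem stmt_19 {V : Type*} [Fintype V] (G : SimpleGraph V) (u v x y : V)
    (hcard : 6 ≤ Fintype.card V) (h3 : ThreeConnected G)
    (huv : u ≠ v) (hxy : x ≠ y) (huy : u ≠ y) (hvx : v ≠ x)
    (hne : ({u, v} : Set V) ≠ {x, y}) :
    ThreeConnected (quasiQuarticExt G u v x y) :=
  stmt_19_general G u v x y h3 huv huy hvx hne
end
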